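/- arXiv:2402.09624 — 3 statements merged into one kernel-verified Lean document; each statement's English description precedes it below -/
import Mathlib

section
/- With the setup of the lumped random walk: for every block index i, the total variation distance between the one-step distribution nu(1,i) of the lumped chain Y started at i and its stationary distribution nu is at most the maximum over vertices w of the total variation distance between the one-step distribution mu(1,w) of the original walk started at w and its stationary distribution mu. -/
open Finset

/-- Total variation distance between two probability vectors on a finite type. -/
noncomputable def dTV {α : Type*} [Fintype α] (P Q : α → ℝ) : ℝ :=
  (∑ x, |P x - Q x|) / 2

/-- the total variation distance of the lumped chain's one-step distribution from
its stationary distribution is bounded by the corresponding maximum for the original walk. -/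
theorem lumped_tv_le_max_tv
    {V : Type*} [Fintype V] [DecidableEq V] [Nonempty V] {m : ℕ}
    (c : V → V → ℝ)
    (hsymm : ∀ w w', c w w' = c w' w)
    (hnonneg : ∀ w w', 0 ≤ c w w')
    (hpos : ∀ w, 0 < ∑ w', c w w')
    (Γ : V → Fin (m + 1))
    (hsurj : Function.Surjective Γ)
    (μ : V → ℝ) (hμ : ∀ w, μ w = (∑ w', c w w') / ∑ w'', ∑ w', c w'' w')
    (p : V → V → ℝ) (hp : ∀ w w', p w w' = c w w' / ∑ w'', c w w'')
    (C : Fin (m + 1) → Fin (m + 1) → ℝ)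
    (hC : ∀ i j, C i j = ∑ w ∈ univ.filter fun w => Γ w = i,
        ∑ w' ∈ univ.filter fun w' => Γ w' = j, c w w')
    (q : Fin (m + 1) → Fin (m + 1) → ℝ)
    (hq : ∀ i j, q i j = C i j / ∑ k, C i k)
    (ν : Fin (m + 1) → ℝ)
    (hν : ∀ i, ν i = (∑ k, C i k) / ∑ l, ∑ k, C l k) :
    ∀ i : Fin (m + 1),
      dTV (fun j => q i j) ν ≤ univ.sup' univ_nonempty (fun w => dTV (fun w' => p w w') μ) := by
  intro i
  classical
  set d : V → ℝ := fun w => ∑ w', c w w' with hd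
  set S : Fin (m+1) → Finset V := fun k => univ.filter fun w => Γ w = k with hS
  have hdpos : ∀ w, 0 < d w := hpos
  have hfiber : ∀ (f : V → ℝ), (∑ k, ∑ w' ∈ S k, f w') = ∑ w', f w' := by
    intro f
    simpa [hS] using Finset.sum_fiberwise univ Γ f
  have hCi : ∀ l, (∑ k, C l k) = ∑ w ∈ S l, d w := by
    intro l
    simp only [hC]
    rw [Finset.sum_comm]
    exact Finset.sum_congr rfl fun w _ => hfiber (c w)
  have hSne : ∀ k, (S k).Nonempty := by
    intro k
    obtain ⟨w, hw⟩ := hsurj k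
    exact ⟨w, by simp [hS, hw]⟩
  have hCipos : ∀ l, 0 < ∑ k, C l k := fun l =>
    (hCi l) ▸ Finset.sum_pos (fun w _ => hdpos w) (hSne l)
  have hTtot : (∑ l, ∑ k, C l k) = ∑ w, d w := by
    rw [Finset.sum_congr rfl fun l _ => hCi l]
    exact hfiber d
  have hν' : ∀ j, ν j = ∑ w' ∈ S j, μ w' := by
    intro j
    rw [hν, hTtot, hCi j, Finset.sum_div]
    exact Finset.sum_congr rfl fun w _ => (hμ w).symm
  have hq' : ∀ j, q i j = ∑ w ∈ S i, (d w / ∑ k, C i k) * ∑ w' ∈ S j, p w w' := by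
    intro j
    rw [hq, hC, Finset.sum_div]
    refine Finset.sum_congr rfl fun w _ => ?_
    have hdw : d w ≠ 0 := (hdpos w).ne'
    have hci : (∑ k, C i k) ≠ 0 := (hCipos i).ne'
    rw [Finset.mul_sum, Finset.sum_div]
    refine Finset.sum_congr rfl fun w' _ => ?_
    rw [hp]
    field_simp
    rw [hd]
    field_simp [(hpos w).ne']
  have hsum1 : (∑ w ∈ S i, d w / (∑ k, C i k)) = 1 := by
    rw [← Finset.sum_div, ← hCi i, div_self (hCipos i).ne']
  have hwnn : ∀ w, 0 ≤ d w / (∑ k, C i k) := fun w =>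
    div_nonneg (hdpos w).le (hCipos i).le
  set M : ℝ := univ.sup' univ_nonempty (fun w => dTV (fun w' => p w w') μ) with hM
  have hdTVle : ∀ w : V, (∑ w', |p w w' - μ w'|) ≤ 2 * M := by
    intro w
    have h1 : dTV (fun w' => p w w') μ ≤ M := by
      rw [hM]
      exact Finset.le_sup' (fun w => dTV (fun w' => p w w') μ) (mem_univ w)
    have : (∑ w', |p w w' - μ w'|) / 2 ≤ M := h1
    linarith
  have key : (∑ j, |q i j - ν j|) ≤ 2 * M := by
    have step1 : (∑ j, |q i j - ν j|) ≤
        ∑ j, ∑ w ∈ S i, (d w / ∑ k, C i k) * ∑ w' ∈ S j, |p w w' - μ w'| := by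
      refine Finset.sum_le_sum fun j _ => ?_
      have hdecomp : q i j - ν j
          = ∑ w ∈ S i, (d w / ∑ k, C i k) * ((∑ w' ∈ S j, p w w') - ν j) := by
        rw [hq' j]
        simp only [mul_sub]
        rw [Finset.sum_sub_distrib, ← Finset.sum_mul, hsum1, one_mul]
      rw [hdecomp]
      calc |∑ w ∈ S i, (d w / ∑ k, C i k) * ((∑ w' ∈ S j, p w w') - ν j)|
          ≤ ∑ w ∈ S i, |(d w / ∑ k, C i k) * ((∑ w' ∈ S j, p w w') - ν j)| :=
            Finset.abs_sum_le_sum_abs _ _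
        _ ≤ ∑ w ∈ S i, (d w / ∑ k, C i k) * ∑ w' ∈ S j, |p w w' - μ w'| := by
            refine Finset.sum_le_sum fun w _ => ?_
            rw [abs_mul, abs_of_nonneg (hwnn w)]
            refine mul_le_mul_of_nonneg_left ?_ (hwnn w)
            rw [hν' j, ← Finset.sum_sub_distrib]
            exact Finset.abs_sum_le_sum_abs _ _
    calc (∑ j, |q i j - ν j|)
        ≤ ∑ j, ∑ w ∈ S i, (d w / ∑ k, C i k) * ∑ w' ∈ S j, |p w w' - μ w'| := step1
      _ = ∑ w ∈ S i, (d w / ∑ k, C i k) * ∑ w', |p w w' - μ w'| := by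
          rw [Finset.sum_comm]
          refine Finset.sum_congr rfl fun w _ => ?_
          rw [← Finset.mul_sum, hfiber fun w' => |p w w' - μ w'|]
      _ ≤ ∑ w ∈ S i, (d w / ∑ k, C i k) * (2 * M) := by
          refine Finset.sum_le_sum fun w _ => mul_le_mul_of_nonneg_left (hdTVle w) (hwnn w)
      _ = 2 * M := by rw [← Finset.sum_mul, hsum1, one_mul]
  show (∑ j, |q i j - ν j|) / 2 ≤ M
  linarith
end

section
/- Let G be a connected graph on n vertices such that every vertex w satisfies (1-delta) D n <= deg(w) <= (1+delta) D n with (1+delta)^2/(1-delta) * D <= 1. Then for every vertex w, the total variation distance between the one-step distribution mu(1,w) of simple random walk from w and the stationary distribution mu satisfies d_TV(mu(1,w), mu) <= (1 - D(1-delta)) * (1+delta)/(1-delta). -/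
open Finset

/-- under the degree bounds `(1-δ)Dn ≤ deg w ≤ (1+δ)Dn` with
`(1+δ)²/(1-δ) · D ≤ 1`, the one-step distribution of simple random walk from any vertex `w`
(uniform over the neighbors of `w`) is within total variation distance
`(1 - D(1-δ)) (1+δ)/(1-δ)` of the stationary distribution `μ_{w'} = deg w'/∑ deg`. -/
theorem one_step_tv_bound
    {V : Type*} [Fintype V] [DecidableEq V] (G : SimpleGraph V) [DecidableRel G.Adj]
    (hconn : G.Connected)
    (D δ : ℝ) (hD : 0 < D) (hD1 : D < 1) (hδ0 : 0 ≤ δ) (hδ1 : δ < 1)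
    (hDδ : (1 + δ) ^ 2 / (1 - δ) * D ≤ 1)
    (hdeg : ∀ w : V, (1 - δ) * D * (Fintype.card V : ℝ) ≤ (G.degree w : ℝ)
      ∧ (G.degree w : ℝ) ≤ (1 + δ) * D * (Fintype.card V : ℝ)) :
    ∀ w : V,
      dTV (fun w' => if G.Adj w w' then 1 / (G.degree w : ℝ) else 0)
          (fun w' => (G.degree w' : ℝ) / ∑ w'' : V, (G.degree w'' : ℝ))
        ≤ (1 - D * (1 - δ)) * ((1 + δ) / (1 - δ)) := by
  intro w
  classical
  have hV : Nonempty V := hconn.nonempty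
  set n : ℝ := (Fintype.card V : ℝ) with hn
  have hnpos : 0 < n := by
    have : 0 < Fintype.card V := Fintype.card_pos
    rw [hn]; exact_mod_cast this
  have hδ' : (0:ℝ) < 1 - δ := by linarith
  have hδ'' : (0:ℝ) < 1 + δ := by linarith
  have hDδ' : (1 + δ) ^ 2 * D ≤ 1 - δ := by
    have h := mul_le_mul_of_nonneg_right hDδ hδ'.le
    calc (1 + δ) ^ 2 * D = (1 + δ) ^ 2 / (1 - δ) * D * (1 - δ) := by field_simp
      _ ≤ 1 * (1 - δ) := h
      _ = 1 - δ := one_mul _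
  have hdegpos : ∀ v : V, 0 < (G.degree v : ℝ) := fun v =>
    lt_of_lt_of_le (by positivity) (hdeg v).1
  set S : ℝ := ∑ v : V, (G.degree v : ℝ) with hS
  have hSlow : (1 - δ) * D * n * n ≤ S := by
    calc (1 - δ) * D * n * n = ∑ _v : V, (1 - δ) * D * n := by
          rw [Finset.sum_const]; simp [hn]; ring
      _ ≤ S := Finset.sum_le_sum fun v _ => (hdeg v).1
  have hSpos : 0 < S := lt_of_lt_of_le (by positivity) hSlow
  -- key pointwise inequality on neighbors
  have hkey : ∀ x : V, G.Adj w x → (G.degree x : ℝ) / S ≤ 1 / (G.degree w : ℝ) := by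
    intro x _
    rw [div_le_div_iff₀ hSpos (hdegpos w)]
    have h1 := (hdeg x).2
    have h2 := (hdeg w).2
    have hxpos := (hdegpos x).le
    have hwpos := (hdegpos w).le
    nlinarith [mul_le_mul h1 h2 hwpos (by positivity : (0:ℝ) ≤ (1+δ)*D*n),
      mul_le_mul_of_nonneg_right hDδ' (by positivity : (0:ℝ) ≤ D * n * n)]
  have hQnonneg : ∀ x : V, 0 ≤ (G.degree x : ℝ) / S := fun x => by positivity
  -- abbreviations
  set Q : V → ℝ := fun x => (G.degree x : ℝ) / S with hQ
  have habs : ∀ x : V,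
      |(if G.Adj w x then 1 / (G.degree w : ℝ) else 0) - Q x|
        = if G.Adj w x then 1 / (G.degree w : ℝ) - Q x else Q x := by
    intro x
    by_cases h : G.Adj w x
    · simp only [h, if_true]
      exact abs_of_nonneg (by linarith [hkey x h])
    · simp only [h, if_false]
      rw [abs_of_nonpos (by linarith [hQnonneg x])]
      ring
  have hfilter : univ.filter (G.Adj w) = G.neighborFinset w := by
    ext x; simp [SimpleGraph.mem_neighborFinset]
  have hQsum : ∑ x : V, Q x = 1 := by
    simp only [hQ, ← Finset.sum_div]
    field_simp
    exact hS.symm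
  have hPsum : ∑ x ∈ univ.filter (G.Adj w), (1 / (G.degree w : ℝ)) = 1 := by
    rw [Finset.sum_const, hfilter, SimpleGraph.card_neighborFinset_eq_degree]
    field_simp
    rw [nsmul_eq_mul]; exact mul_one_div_cancel (ne_of_gt (hdegpos w))
  have hQsplit : ∑ x ∈ univ.filter (G.Adj w), Q x
      + ∑ x ∈ univ.filter (fun x => ¬ G.Adj w x), Q x = 1 := by
    rw [Finset.sum_filter_add_sum_filter_not]
    exact hQsum
  have hsum : ∑ x : V, |(if G.Adj w x then 1 / (G.degree w : ℝ) else 0) - Q x|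
      = 2 * ∑ x ∈ univ.filter (fun x => ¬ G.Adj w x), Q x := by
    calc ∑ x : V, |(if G.Adj w x then 1 / (G.degree w : ℝ) else 0) - Q x|
        = ∑ x : V, (if G.Adj w x then 1 / (G.degree w : ℝ) - Q x else Q x) := by
          exact Finset.sum_congr rfl fun x _ => habs x
      _ = ∑ x ∈ univ.filter (G.Adj w), (1 / (G.degree w : ℝ) - Q x)
          + ∑ x ∈ univ.filter (fun x => ¬ G.Adj w x), Q x := Finset.sum_ite _ _
      _ = (∑ x ∈ univ.filter (G.Adj w), (1 / (G.degree w : ℝ)))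
          - (∑ x ∈ univ.filter (G.Adj w), Q x)
          + ∑ x ∈ univ.filter (fun x => ¬ G.Adj w x), Q x := by
          rw [Finset.sum_sub_distrib]
      _ = 2 * ∑ x ∈ univ.filter (fun x => ¬ G.Adj w x), Q x := by
          rw [hPsum]; linarith [hQsplit]
  -- cardinality of non-neighbors
  have hdlt : G.degree w ≤ Fintype.card V := (G.degree_lt_card_verts w).le
  have hcard : ((univ.filter (fun x => ¬ G.Adj w x)).card : ℝ) = n - (G.degree w : ℝ) := by
    have h1 : (univ.filter (fun x => ¬ G.Adj w x)).card
        = Fintype.card V - (univ.filter (G.Adj w)).card := by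
      rw [Finset.filter_not]
      rw [Finset.card_sdiff_of_subset (Finset.filter_subset _ _)]
      simp
    have h2 : (univ.filter (G.Adj w)).card = G.degree w := by
      rw [hfilter]; exact SimpleGraph.card_neighborFinset_eq_degree G w
    rw [h1, h2, Nat.cast_sub hdlt]
  -- bound the mass on non-neighbors
  have hmass : ∑ x ∈ univ.filter (fun x => ¬ G.Adj w x), Q x
      ≤ (n - (G.degree w : ℝ)) * ((1 + δ) * D * n / S) := by
    calc ∑ x ∈ univ.filter (fun x => ¬ G.Adj w x), Q x
        ≤ ∑ _x ∈ univ.filter (fun x => ¬ G.Adj w x), ((1 + δ) * D * n / S) := by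
          refine Finset.sum_le_sum fun x _ => ?_
          simp only [hQ]
          gcongr
          exact (hdeg x).2
      _ = ((univ.filter (fun x => ¬ G.Adj w x)).card : ℝ) * ((1 + δ) * D * n / S) := by
          rw [Finset.sum_const, nsmul_eq_mul]
      _ = (n - (G.degree w : ℝ)) * ((1 + δ) * D * n / S) := by rw [hcard]
  have hfinal : (n - (G.degree w : ℝ)) * ((1 + δ) * D * n / S)
      ≤ (1 - D * (1 - δ)) * ((1 + δ) / (1 - δ)) := by
    rw [mul_div_assoc', ← mul_div_assoc, div_le_div_iff₀ hSpos hδ']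
    have hwlow := (hdeg w).1
    have h2 : (0:ℝ) ≤ 1 - D * (1 - δ) := by
      have := mul_le_of_le_one_right hD.le (by linarith : (1:ℝ) - δ ≤ 1)
      linarith
    have h1 : n - (G.degree w : ℝ) ≤ n * (1 - D * (1 - δ)) := by
      have hring : n * (1 - D * (1 - δ)) = n - (1 - δ) * D * n := by ring
      linarith [hwlow]
    calc (n - (G.degree w : ℝ)) * ((1 + δ) * D * n) * (1 - δ)
        ≤ n * (1 - D * (1 - δ)) * ((1 + δ) * D * n) * (1 - δ) := by
          have hp1 : (0:ℝ) ≤ (1 + δ) * D * n := by positivity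
          exact mul_le_mul_of_nonneg_right (mul_le_mul_of_nonneg_right h1 hp1) hδ'.le
      _ = (1 - D * (1 - δ)) * (1 + δ) * ((1 - δ) * D * n * n) := by ring
      _ ≤ (1 - D * (1 - δ)) * (1 + δ) * S :=
          mul_le_mul_of_nonneg_left hSlow (mul_nonneg h2 hδ''.le)
  -- conclude
  rw [dTV, hsum]
  linarith [hmass.trans hfinal]
end

section
/- Let G be a connected graph on n vertices, v a fixed vertex, and suppose: (a) every vertex has degree at least (1-delta) D n and at most (1+delta) D n; (b) for every vertex w != v, the fraction of neighbors of w that are themselves adjacent to v is at least alpha > 0. Then for every vertex w', the expected hitting time of v from w' for simple random walk satisfies E[T_{w',v}] <= 2 n D (1+delta)/alpha. -/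
open Finset

/-- `survival K v k w = P(T_{w,v} > k)` for the Markov chain with transition kernel `K`. -/
noncomputable def survival {S : Type*} [Fintype S] [DecidableEq S]
    (K : S → S → ℝ) (v : S) : ℕ → S → ℝ
  | 0, w => if w = v then 0 else 1
  | k + 1, w => if w = v then 0 else ∑ w', K w w' * survival K v k w'

lemma survival_nonneg {S : Type*} [Fintype S] [DecidableEq S]
    (K : S → S → ℝ) (hK : ∀ a b, 0 ≤ K a b) (v : S) :
    ∀ k w, 0 ≤ survival K v k w := by
  intro k
  induction k with
  | zero => intro w; simp only [survival]; split <;> norm_num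
  | succ k ih =>
    intro w; simp only [survival]; split
    · exact le_refl 0
    · exact Finset.sum_nonneg fun b _ => mul_nonneg (hK w b) (ih b)

lemma survival_at_v {S : Type*} [Fintype S] [DecidableEq S]
    (K : S → S → ℝ) (v : S) (k : ℕ) : survival K v k v = 0 := by
  cases k <;> simp [survival]

lemma survival_step_le {S : Type*} [Fintype S] [DecidableEq S]
    (K : S → S → ℝ) (hK : ∀ a b, 0 ≤ K a b) (hrow : ∀ a, ∑ b, K a b = 1)
    (v : S) (k : ℕ) (c : ℝ) (hc : 0 ≤ c) (h : ∀ w, survival K v k w ≤ c) :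
    ∀ w, survival K v (k + 1) w ≤ c := by
  intro w
  simp only [survival]
  split
  · exact hc
  · calc ∑ b, K w b * survival K v k b ≤ ∑ b, K w b * c :=
          Finset.sum_le_sum fun b _ => mul_le_mul_of_nonneg_left (h b) (hK w b)
    _ = c := by rw [← Finset.sum_mul, hrow w, one_mul]

/-- if every degree lies in `[(1-δ)Dn, (1+δ)Dn]` and every vertex `w ≠ v` has a
fraction at least `α` of its neighbors adjacent to `v`, then the expected hitting time of `v`
from any vertex `w'` (computed as `E[T] = ∑_{k≥0} P(T > k)`) is at most `2nD(1+δ)/α`. -/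
theorem expected_hitting_time_bound
    {V : Type*} [Fintype V] [DecidableEq V] (G : SimpleGraph V) [DecidableRel G.Adj]
    (hconn : G.Connected) (v : V)
    (D δ α : ℝ) (hD : 0 < D) (hD1 : D < 1) (hδ0 : 0 ≤ δ) (hδ1 : δ < 1) (hα : 0 < α)
    (hdeg : ∀ w : V, (1 - δ) * D * (Fintype.card V : ℝ) ≤ (G.degree w : ℝ)
      ∧ (G.degree w : ℝ) ≤ (1 + δ) * D * (Fintype.card V : ℝ))
    (hfrac : ∀ w : V, w ≠ v →
      α ≤ ((univ.filter fun w'' => G.Adj w w'' ∧ G.Adj w'' v).card : ℝ) / (G.degree w : ℝ)) :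
    ∀ w' : V,
      (∑' k : ℕ, survival (fun a b => if G.Adj a b then 1 / (G.degree a : ℝ) else 0) v k w')
        ≤ 2 * (Fintype.card V : ℝ) * D * (1 + δ) / α := by
  classical
  intro w'
  set n : ℝ := (Fintype.card V : ℝ) with hn
  set K : V → V → ℝ := fun a b => if G.Adj a b then 1 / (G.degree a : ℝ) else 0 with hKdef
  have hVne : Nonempty V := hconn.nonempty
  have hn0 : 0 < n := by
    rw [hn]
    exact_mod_cast Fintype.card_pos
  have hδ1' : 0 < 1 - δ := by linarith
  have h1δ : 0 < 1 + δ := by linarith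
  have hDn : 0 < (1 + δ) * D * n := by positivity
  have hdegpos : ∀ w : V, 0 < (G.degree w : ℝ) := fun w =>
    lt_of_lt_of_le (by positivity) (hdeg w).1
  have hdeg1 : ∀ w : V, (1 : ℝ) ≤ (G.degree w : ℝ) := by
    intro w
    have : 0 < G.degree w := by exact_mod_cast hdegpos w
    exact_mod_cast this
  have hK0 : ∀ a b, 0 ≤ K a b := by
    intro a b; simp only [hKdef]
    split
    · positivity
    · exact le_refl 0
  have hrow : ∀ a, ∑ b, K a b = 1 := by
    intro a
    have : ∑ b, K a b = ∑ b ∈ univ.filter (G.Adj a), 1 / (G.degree a : ℝ) := by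
      rw [Finset.sum_filter]
    rw [this, Finset.sum_const, ← SimpleGraph.neighborFinset_eq_filter, nsmul_eq_mul]
    have hcd : ((G.neighborFinset a).card : ℝ) = (G.degree a : ℝ) := rfl
    rw [hcd]
    field_simp
    exact div_self (hdegpos a).ne'
  -- main case split: whether there is a vertex other than v
  by_cases hex : ∃ w : V, w ≠ v
  case neg =>
    push_neg at hex
    have hw' : w' = v := hex w'
    have hz : ∀ k : ℕ, survival K v k w' = 0 := fun k => by
      rw [hw']; exact survival_at_v K v k
    rw [tsum_congr hz, tsum_zero]
    positivity
  obtain ⟨w₀, hw₀⟩ := hex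
  -- α ≤ 1
  have hα1 : α ≤ 1 := by
    have h1 := hfrac w₀ hw₀
    have hcard : ((univ.filter fun w'' => G.Adj w₀ w'' ∧ G.Adj w'' v).card : ℝ)
        ≤ (G.degree w₀ : ℝ) := by
      have hsub : (univ.filter fun w'' => G.Adj w₀ w'' ∧ G.Adj w'' v) ⊆ G.neighborFinset w₀ := by
        intro x hx
        simp only [Finset.mem_filter] at hx
        simp [SimpleGraph.mem_neighborFinset, hx.2.1]
      exact_mod_cast Finset.card_le_card hsub
    have := h1.trans (div_le_one_of_le₀ hcard (hdegpos w₀).le)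
    linarith
  set q : ℝ := 1 / ((1 + δ) * D * n) with hq
  set p : ℝ := α * q with hp
  have hq0 : 0 < q := by positivity
  have hp0 : 0 < p := by positivity
  have hq1 : q ≤ 1 := by
    rw [hq]
    rw [div_le_one hDn]
    exact (hdeg w₀).2.trans' (hdeg1 w₀) |>.trans' (le_refl _) |>.trans (le_refl _)
  have hp1 : p ≤ 1 := by
    calc p = α * q := hp
    _ ≤ 1 * 1 := mul_le_mul hα1 hq1 hq0.le zero_le_one
    _ = 1 := one_mul 1
  set r : ℝ := 1 - p with hr
  have hr0 : 0 ≤ r := by linarith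
  have hr1 : r < 1 := by linarith
  -- key two-step estimate
  have key : ∀ (k : ℕ) (c : ℝ), 0 ≤ c → (∀ w, survival K v k w ≤ c) →
      ∀ w, survival K v (k + 2) w ≤ c * r := by
    intro k c hc hA w
    have hA1 : ∀ w, survival K v (k + 1) w ≤ c := survival_step_le K hK0 hrow v k c hc hA
    show survival K v ((k + 1) + 1) w ≤ c * r
    simp only [survival]
    split
    · positivity
    case isFalse hwv =>
    -- bound each term
    have hterm : ∀ b, K w b * survival K v (k + 1) b
        ≤ K w b * (c * (1 - q * (if G.Adj b v then 1 else 0))) := by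
      intro b
      refine mul_le_mul_of_nonneg_left ?_ (hK0 w b)
      by_cases hbv : G.Adj b v
      · -- b adjacent to v: survival (k+1) b ≤ c * (1 - K b v) ≤ c (1 - q)
        have hbne : b ≠ v := G.ne_of_adj hbv
        have h1 : survival K v (k + 1) b = ∑ w'', K b w'' * survival K v k w'' := by
          simp only [survival]; rw [if_neg hbne]
        have h2 : ∑ w'', K b w'' * survival K v k w''
            ≤ ∑ w'', K b w'' * (if w'' = v then 0 else c) := by
          refine Finset.sum_le_sum fun x _ => mul_le_mul_of_nonneg_left ?_ (hK0 b x)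
          by_cases hxv : x = v
          · subst hxv; rw [if_pos rfl, survival_at_v]
          · rw [if_neg hxv]; exact hA x
        have h3 : ∑ w'', K b w'' * (if w'' = v then 0 else c)
            = c * (1 - K b v) := by
          have : ∀ x : V, K b x * (if x = v then 0 else c)
              = K b x * c - (if x = v then K b x * c else 0) := by
            intro x; by_cases hxv : x = v <;> simp [hxv]
          rw [Finset.sum_congr rfl fun x _ => this x, Finset.sum_sub_distrib,
            Finset.sum_ite_eq' univ v (fun x => K b x * c), if_pos (Finset.mem_univ v),
            ← Finset.sum_mul, hrow b]
          ring
        have hKbv : q ≤ K b v := by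
          simp only [hKdef, if_pos hbv]
          rw [hq]
          exact one_div_le_one_div_of_le (hdegpos b) (hdeg b).2
        have h4 : c * (1 - K b v) ≤ c * (1 - q) :=
          mul_le_mul_of_nonneg_left (by linarith) hc
        rw [if_pos hbv]
        calc survival K v (k + 1) b ≤ c * (1 - q) := by
              rw [h1]; exact (h2.trans h3.le).trans h4
        _ = c * (1 - q * 1) := by ring
      · rw [if_neg hbv]
        calc survival K v (k + 1) b ≤ c := hA1 b
        _ = c * (1 - q * 0) := by ring
    calc ∑ b, K w b * survival K v (k + 1) b
        ≤ ∑ b, K w b * (c * (1 - q * (if G.Adj b v then 1 else 0))) :=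
          Finset.sum_le_sum fun b _ => hterm b
    _ = c * (∑ b, K w b) - c * q * ∑ b, (if G.Adj b v then K w b else 0) := by
          rw [Finset.mul_sum, Finset.mul_sum, ← Finset.sum_sub_distrib]
          refine Finset.sum_congr rfl fun b _ => ?_
          by_cases hbv : G.Adj b v <;> simp [hbv] <;> ring
    _ = c - c * q * ∑ b, (if G.Adj b v then K w b else 0) := by rw [hrow w, mul_one]
    _ ≤ c - c * q * α := by
          have hR : α ≤ ∑ b, (if G.Adj b v then K w b else 0) := by
            have hsum : ∑ b, (if G.Adj b v then K w b else 0)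
                = ((univ.filter fun w'' => G.Adj w w'' ∧ G.Adj w'' v).card : ℝ)
                  / (G.degree w : ℝ) := by
              have : ∀ b : V, (if G.Adj b v then K w b else 0)
                  = if G.Adj w b ∧ G.Adj b v then 1 / (G.degree w : ℝ) else 0 := by
                intro b
                simp only [hKdef]
                by_cases h1 : G.Adj b v <;> by_cases h2 : G.Adj w b <;> simp [h1, h2]
              rw [Finset.sum_congr rfl fun b _ => this b, ← Finset.sum_filter,
                Finset.sum_const]
              simp [div_eq_mul_inv, mul_comm]
            rw [hsum]
            exact hfrac w hwv
          have hcq : 0 ≤ c * q := by positivity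
          nlinarith
    _ = c * r := by rw [hr, hp]; ring
  -- odd/even bounds
  have bound : ∀ j : ℕ, (∀ w, survival K v (2 * j) w ≤ r ^ j)
      ∧ (∀ w, survival K v (2 * j + 1) w ≤ r ^ j) := by
    intro j
    induction j with
    | zero =>
      constructor
      · intro w; simp only [survival, pow_zero, Nat.mul_zero]
        split <;> norm_num
      · intro w
        exact survival_step_le K hK0 hrow v 0 1 zero_le_one
          (fun w => by simp only [survival]; split <;> norm_num) w
    | succ j ih =>
      have h2 : ∀ w, survival K v (2 * j + 2) w ≤ r ^ j * r :=
        key (2 * j) (r ^ j) (pow_nonneg hr0 j) ih.1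
      have heq : 2 * (j + 1) = 2 * j + 2 := by ring
      have hpow : r ^ (j + 1) = r ^ j * r := pow_succ r j
      constructor
      · intro w; rw [heq, hpow]; exact h2 w
      · intro w
        rw [heq, hpow]
        exact survival_step_le K hK0 hrow v (2 * j + 2) (r ^ j * r)
          (by positivity) h2 w
  -- summation
  set f : ℕ → ℝ := fun k => survival K v k w' with hf
  set g : ℕ → ℝ := fun k => r ^ (k / 2) with hg
  have hfg : ∀ k, f k ≤ g k := by
    intro k
    obtain ⟨j, hj | hj⟩ := Nat.even_or_odd' k
    · have : k / 2 = j := by omega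
      rw [hg]; simp only [this]
      rw [hf]; simp only [hj]; exact (bound j).1 w'
    · have : k / 2 = j := by omega
      rw [hg]; simp only [this]
      rw [hf]; simp only [hj]; exact (bound j).2 w'
  have hf0 : ∀ k, 0 ≤ f k := fun k => survival_nonneg K hK0 v k w'
  have hge : (fun j => g (2 * j)) = fun j => r ^ j := by
    funext j; simp only [hg]
    congr 1; omega
  have hgo : (fun j => g (2 * j + 1)) = fun j => r ^ j := by
    funext j; simp only [hg]
    congr 1; omega
  have hgeom : Summable fun j : ℕ => r ^ j := summable_geometric_of_lt_one hr0 hr1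
  have hgsum : Summable g :=
    Summable.even_add_odd (by rw [hge]; exact hgeom) (by rw [hgo]; exact hgeom)
  have hfsum : Summable f := Summable.of_nonneg_of_le hf0 hfg hgsum
  have htsum_g : ∑' k, g k = 2 * (1 - r)⁻¹ := by
    rw [← tsum_even_add_odd (by rw [hge]; exact hgeom) (by rw [hgo]; exact hgeom),
      hge, hgo, tsum_geometric_of_lt_one hr0 hr1]
    ring
  have : ∑' k, f k ≤ 2 * (1 - r)⁻¹ := by
    rw [← htsum_g]; exact Summable.tsum_le_tsum hfg hfsum hgsum
  refine this.trans (le_of_eq ?_)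
  rw [hr]
  have : (1 : ℝ) - (1 - p) = p := by ring
  rw [this, hp, hq]
  field_simp
end
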